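/- arXiv:1401.7319 — 5 statements merged into one kernel-verified Lean document; each statement's English description precedes it below -/
import Mathlib

section
/- Let V be a vector space with a symplectic bilinear form ω that is nondegenerate only in the weak sense, and let W ⊆ V be a coisotropic subspace (i.e. W^⊥ ⊆ W, where W^⊥ is the ω-orthogonal). Then the subspace I = {([w], w) : w ∈ W} of (W/W^⊥) × V is Lagrangian, i.e. I^⊥ = I, where [w] denotes the class of w in the reduction W/W^⊥ (equipped with the symplectic form ω̲ induced by ω), and the product carries the form (−ω̲) ⊕ ω. -/
/-- The ω-orthogonal complement of a subspace, as a submodule. -/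
def orth {V : Type*} [AddCommGroup V] [Module ℝ V]
    (ω : V →ₗ[ℝ] V →ₗ[ℝ] ℝ) (S : Submodule ℝ V) : Submodule ℝ V where
  carrier := {v | ∀ s ∈ S, ω v s = 0}
  add_mem' := by intro a b ha hb s hs; simp [map_add, ha s hs, hb s hs]
  zero_mem' := by intro s hs; simp
  smul_mem' := by intro c a ha s hs; simp [ha s hs]

/-- The ω-orthogonal of a set. -/
def sorth {V : Type*} [AddCommGroup V] [Module ℝ V]
    (ω : V →ₗ[ℝ] V →ₗ[ℝ] ℝ) (S : Set V) : Set V :=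
  {v | ∀ s ∈ S, ω v s = 0}

/-- The form (−ωA) ⊕ ωB on a product. -/
def prodForm {A B : Type*} [AddCommGroup A] [Module ℝ A] [AddCommGroup B] [Module ℝ B]
    (ωA : A →ₗ[ℝ] A →ₗ[ℝ] ℝ) (ωB : B →ₗ[ℝ] B →ₗ[ℝ] ℝ) :
    (A × B) →ₗ[ℝ] (A × B) →ₗ[ℝ] ℝ :=
  LinearMap.mk₂ ℝ (fun p q => - ωA p.1 q.1 + ωB p.2 q.2)
    (fun p p' q => by simp [map_add]; ring)
    (fun c p q => by simp [map_smul]; ring)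
    (fun p q q' => by simp [map_add]; ring)
    (fun p c q => by simp [map_smul]; ring)

/-- for a coisotropic subspace W of a (weak) symplectic vector space (V, ω),
the canonical relation I = {([w], w) : w ∈ W} ⊆ (W/W^⊥) × V is Lagrangian, i.e. I^⊥ = I
with respect to the form (−ω̲) ⊕ ω. -/
theorem stmt0 {V : Type*} [AddCommGroup V] [Module ℝ V]
    (ω : V →ₗ[ℝ] V →ₗ[ℝ] ℝ)
    (halt : ∀ v, ω v v = 0)
    (hnd : ∀ v, (∀ w, ω v w = 0) → v = 0)
    (W : Submodule ℝ V) (hco : orth ω W ≤ W)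
    (ωbar : (W ⧸ (orth ω W).comap W.subtype) →ₗ[ℝ]
            (W ⧸ (orth ω W).comap W.subtype) →ₗ[ℝ] ℝ)
    (hωbar : ∀ v w : W,
      ωbar (Submodule.Quotient.mk v) (Submodule.Quotient.mk w) = ω v w)
    (I : Set ((W ⧸ (orth ω W).comap W.subtype) × V))
    (hI : I = {p | ∃ w : W, p = (Submodule.Quotient.mk w, (w : V))}) :
    sorth (prodForm ωbar ω) I = I := by
  subst hI
  ext ⟨a, v⟩
  constructor
  · intro h
    -- pick u with a = [u]
    obtain ⟨u, rfl⟩ := Submodule.Quotient.mk_surjective _ a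
    have hkey : ∀ w : W, ω v w = ω (u : V) w := by
      intro w
      have := h (Submodule.Quotient.mk w, (w : V)) ⟨w, rfl⟩
      simp only [prodForm, LinearMap.mk₂_apply, hωbar] at this
      linarith
    have hdiff : v - (u : V) ∈ orth ω W := by
      intro s hs
      have := hkey ⟨s, hs⟩
      simp [map_sub, this]
    have hvW : v ∈ W := by
      have := W.add_mem (hco hdiff) u.2
      simpa using this
    refine ⟨⟨v, hvW⟩, ?_⟩
    have hq : (Submodule.Quotient.mk (⟨v, hvW⟩ : W) :
        W ⧸ (orth ω W).comap W.subtype) = Submodule.Quotient.mk u := by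
      rw [Submodule.Quotient.eq]
      exact hdiff
    simp [hq]
  · rintro ⟨w, h⟩
    rw [h]
    rintro ⟨b, z⟩ ⟨w', h'⟩
    rw [h']
    simp [prodForm, hωbar, sorth]
end

section
/- Define on G = ℤ the ternary relation L = {(n, m, −n−m−1) : n, m ∈ ℤ} and the involution I(n) = −n. Set L₃ = {(m, n, m+n+1)}, L₁ = L₃ ∘ L_I where L_I = {(x, I x) : x ∈ ℤ} (so L₁ = {1}), and L₂ = L₃ ∘ (L₁ × Id) = {(m, m+2) : m ∈ ℤ}. Then: (a) L is cyclically symmetric; (b) I is an involution; (c) L₃ ∘ (L₃ × Id) = L₃ ∘ (Id × L₃); but (d) L₃ ∘ (L₁ × L₁) = {3} ≠ L₁, (e) L₂ ∘ L₂ = {(m, m+4)} ≠ L₂, and (f) L₂ ∘ L₁ = {3} ≠ L₁. -/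
/-- Composition of set relations, first R : A → B, then S : B → C. -/
def rcomp {A B C : Type*} (R : Set (A × B)) (S : Set (B × C)) : Set (A × C) :=
  {p | ∃ b, (p.1, b) ∈ R ∧ (b, p.2) ∈ S}

namespace RSGZ

/-- The inversion I(n) = −n. -/
def I : ℤ → ℤ := fun n => -n

/-- The ternary relation L = {(n, m, −n−m−1)}. -/
def L : Set (ℤ × ℤ × ℤ) := {p | p.2.2 = -p.1 - p.2.1 - 1}

/-- L₃ = I_rel ∘ L_rel, i.e. {((m,n), k) : (m,n,−k) ∈ L} = {((m,n), m+n+1)}. -/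
def L₃ : Set ((ℤ × ℤ) × ℤ) := {p | (p.1.1, p.1.2, -p.2) ∈ L}

/-- L₁ = L₃ ∘ L_I where L_I = {(x, I x)}. -/
def L₁ : Set ℤ := {z | ∃ x : ℤ, ((x, I x), z) ∈ L₃}

/-- L₂ = L₃ ∘ (L₁ × Id). -/
def L₂ : Set (ℤ × ℤ) := {p | ∃ a ∈ L₁, ((a, p.1), p.2) ∈ L₃}

end RSGZ

open RSGZ in
/-- the structure (ℤ, L, I) with L = {(n,m,−n−m−1)}, I(n) = −n satisfies
axioms A.1–A.4 of a relational symplectic groupoid: L is cyclically symmetric, I is an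
involution, L₃ (= {((m,n), m+n+1)}) is associative; but it fails A.5 and A.6:
L₁ = {1}, L₂ = {(m, m+2)}, while L₃ ∘ (L₁ × L₁) = {3} ≠ L₁, L₂ ∘ L₂ = {(m, m+4)} ≠ L₂,
and L₂ ∘ L₁ = {3} ≠ L₁. -/
theorem stmt6 :
    (∀ x y z : ℤ, (x, y, z) ∈ L → (y, z, x) ∈ L) ∧
    (∀ n : ℤ, I (I n) = n) ∧
    ({q : (ℤ × ℤ × ℤ) × ℤ | ∃ b, ((q.1.1, q.1.2.1), b) ∈ L₃ ∧ ((b, q.1.2.2), q.2) ∈ L₃}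
      = {q : (ℤ × ℤ × ℤ) × ℤ |
          ∃ b, ((q.1.2.1, q.1.2.2), b) ∈ L₃ ∧ ((q.1.1, b), q.2) ∈ L₃}) ∧
    (L₁ = {1}) ∧
    (L₂ = {p : ℤ × ℤ | p.2 = p.1 + 2}) ∧
    ({z : ℤ | ∃ a ∈ L₁, ∃ b ∈ L₁, ((a, b), z) ∈ L₃} = {3} ∧ ({3} : Set ℤ) ≠ L₁) ∧
    (rcomp L₂ L₂ = {p : ℤ × ℤ | p.2 = p.1 + 4} ∧ rcomp L₂ L₂ ≠ L₂) ∧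
    ({z : ℤ | ∃ a ∈ L₁, (a, z) ∈ L₂} = {3} ∧ ({3} : Set ℤ) ≠ L₁) := by

  have hL3 : ∀ m n k : ℤ, ((m, n), k) ∈ L₃ ↔ k = m + n + 1 := by
    intro m n k; simp [L₃, L]; omega
  have hL1 : L₁ = {1} := by
    ext z; simp [L₁, I, hL3]
  have hL2 : L₂ = {p : ℤ × ℤ | p.2 = p.1 + 2} := by
    ext ⟨a, b⟩; simp [L₂, hL1, hL3]; omega
  refine ⟨?_, ?_, ?_, hL1, hL2, ⟨?_, ?_⟩, ⟨?_, ?_⟩, ⟨?_, ?_⟩⟩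
  · intro x y z h; simp [L] at *; omega
  · intro n; simp [I]
  · ext ⟨⟨x, y, z⟩, w⟩; simp only [Set.mem_setOf_eq, hL3]
    constructor
    · rintro ⟨b, rfl, rfl⟩; exact ⟨y + z + 1, rfl, by ring⟩
    · rintro ⟨b, rfl, rfl⟩; exact ⟨x + y + 1, rfl, by ring⟩
  · ext z; simp [hL1, hL3]
  · rw [hL1]; intro h
    have : (3 : ℤ) ∈ ({1} : Set ℤ) := h ▸ rfl
    simp at this
  · ext ⟨a, b⟩; simp [rcomp, hL2]; omega
  · intro h
    have h4 : rcomp L₂ L₂ = {p : ℤ × ℤ | p.2 = p.1 + 4} := by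
      ext ⟨a, b⟩; simp [rcomp, hL2]; omega
    have : ((0 : ℤ), (4 : ℤ)) ∈ L₂ := by rw [← h, h4]; simp
    rw [hL2] at this; simp at this
  · ext z; simp [hL1, hL2]
  · rw [hL1]; intro h
    have : (3 : ℤ) ∈ ({1} : Set ℤ) := h ▸ rfl
    simp at this
end

section
/- Let (G, L, I) be a relational symplectic groupoid (axioms A.1–A.6 as relations). Then L₂ is idempotent: L₂ ∘ L₂ = L₂. -/
/-- in a relational symplectic groupoid (relationally: given associativity
of L₃ (A.4), L₃ ∘ (L₁ × L₁) = L₁ (A.5), and L₂ = L₃ ∘ (L₁ × Id) = L₃ ∘ (Id × L₁) (A.6)),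
the relation L₂ is idempotent: L₂ ∘ L₂ = L₂. -/
theorem stmt7 {G : Type*}
    (L₃ : Set ((G × G) × G)) (L₁ : Set G) (L₂ : Set (G × G))
    (hL₂ : L₂ = {p | ∃ a ∈ L₁, ((a, p.1), p.2) ∈ L₃})
    (hA4 : {q : (G × G × G) × G |
              ∃ b, ((q.1.1, q.1.2.1), b) ∈ L₃ ∧ ((b, q.1.2.2), q.2) ∈ L₃}
         = {q : (G × G × G) × G |
              ∃ b, ((q.1.2.1, q.1.2.2), b) ∈ L₃ ∧ ((q.1.1, b), q.2) ∈ L₃})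
    (hA5 : {z : G | ∃ a ∈ L₁, ∃ b ∈ L₁, ((a, b), z) ∈ L₃} = L₁)
    (hA6 : L₂ = {p | ∃ a ∈ L₁, ((p.1, a), p.2) ∈ L₃}) :
    rcomp L₂ L₂ = L₂ := by
  have assoc := fun q => Set.ext_iff.mp hA4 q
  ext ⟨x, y⟩
  constructor
  · rintro ⟨m, hxm, hmy⟩
    rw [hL₂] at hxm hmy ⊢
    obtain ⟨a, ha, hax⟩ := hxm
    obtain ⟨a', ha', ha'm⟩ := hmy
    obtain ⟨c, hc1, hc2⟩ := (assoc ((a', a, x), y)).mpr ⟨m, hax, ha'm⟩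
    have hcL₁ : c ∈ L₁ := by
      rw [← hA5]; exact ⟨a', ha', a, ha, hc1⟩
    exact ⟨c, hcL₁, hc2⟩
  · intro hxy
    rw [hL₂] at hxy
    obtain ⟨a, ha, hax⟩ := hxy
    rw [← hA5] at ha
    obtain ⟨a₁, ha₁, a₂, ha₂, h12⟩ := ha
    obtain ⟨b, hb1, hb2⟩ := (assoc ((a₁, a₂, x), y)).mp ⟨a, h12, hax⟩
    exact ⟨b, hL₂ ▸ ⟨a₂, ha₂, hb1⟩, hL₂ ▸ ⟨a₁, ha₁, hb2⟩⟩
end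

section
/- Let V be a symplectic vector space and suppose L₂ ⊆ V × V is a Lagrangian subspace (with respect to (−ω) ⊕ ω) contained in C × C for a subspace C ⊆ V, and containing the diagonal of C. Then C^⊥ ⊆ C, i.e. C is a coisotropic subspace of V. -/
/-- Transpose (relational converse) of a relation. -/
def transp {A B : Type*} (R : Set (A × B)) : Set (B × A) :=
  {p | (p.2, p.1) ∈ R}

/-- if L₂ ⊆ V × V is Lagrangian for (−ω) ⊕ ω, is contained in C × C for a
subspace C, and contains the diagonal of C, then C is coisotropic: C^⊥ ⊆ C. -/
theorem stmt9 {V : Type*} [AddCommGroup V] [Module ℝ V]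
    (ω : V →ₗ[ℝ] V →ₗ[ℝ] ℝ)
    (halt : ∀ v, ω v v = 0)
    (hnd : ∀ v, (∀ w, ω v w = 0) → v = 0)
    (C : Submodule ℝ V)
    (L₂ : Submodule ℝ (V × V))
    (hLag : sorth (prodForm ω ω) (L₂ : Set (V × V)) = (L₂ : Set (V × V)))
    (hsub : ∀ p ∈ L₂, p.1 ∈ C ∧ p.2 ∈ C)
    (hdiag : ∀ c ∈ C, (c, c) ∈ L₂) :
    orth ω C ≤ C := by
  intro v hv
  have hvL : (v, v) ∈ (L₂ : Set (V × V)) := by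
    rw [← hLag]
    intro p hp
    obtain ⟨h1, h2⟩ := hsub p hp
    simp [prodForm, LinearMap.mk₂, hv p.1 h1, hv p.2 h2]
  exact (hsub _ hvL).1
end

section
/- Define on G = ℤ the relation L = {(n, m, k) ∈ ℤ³ : n + m + k is odd} (equivalently L = {(n, m, −n−m−2k−1)}), and I(n) = −n. Then L₁ = 2ℤ+1, L₂ = {(m,n) : m − n ∈ 2ℤ}, L₃ = {(m,n,p) : p − m − n odd}, and C = L₂ ∘ G = ℤ. These satisfy all relational symplectic groupoid axioms A.1–A.6 (as relation identities): cyclic symmetry of L, I² = id, associativity of L₃, L₃ ∘ (L₁ × L₁) = L₁, L₂ ∘ L₂ = L₂, L₂ ∘ L₁ = L₁, L₂ ∘ L₃ = L₃ ∘ (L₂ × L₂) = L₃, and L₂^† = L₂; yet the quotient C/L₂ = ℤ/2ℤ has two elements while the symplectic reduction of C (with the zero form, C^⊥ = C) is a single point. -/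
namespace RSGZ2

/-- The inversion I(n) = −n. -/
def I : ℤ → ℤ := fun n => -n

/-- L = {(n, m, k) : n + m + k odd} = {(n, m, −n−m−2k−1)}. -/
def L : Set (ℤ × ℤ × ℤ) := {p | Odd (p.1 + p.2.1 + p.2.2)}

/-- L₃ = I_rel ∘ L_rel = {((m,n), k) : (m, n, −k) ∈ L} = {(m, n, k) : k − m − n odd}. -/
def L₃ : Set ((ℤ × ℤ) × ℤ) := {p | (p.1.1, p.1.2, -p.2) ∈ L}

/-- L₁ = L₃ ∘ L_I where L_I = {(x, I x)}. -/
def L₁ : Set ℤ := {z | ∃ x : ℤ, ((x, I x), z) ∈ L₃}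

/-- L₂ = L₃ ∘ (L₁ × Id). -/
def L₂ : Set (ℤ × ℤ) := {p | ∃ a ∈ L₁, ((a, p.1), p.2) ∈ L₃}

/-- C = L₂ ∘ G_rel, the support of L₂. -/
def C : Set ℤ := {z | ∃ x : ℤ, (x, z) ∈ L₂}

/-- The zero symplectic form on the zero-dimensional manifold ℤ. -/
def ωZ : ℤ → ℤ → ℝ := fun _ _ => 0

end RSGZ2


namespace RSGZ2

lemma mem_L {x y z : ℤ} : (x, y, z) ∈ L ↔ Odd (x + y + z) := Iff.rfl

lemma hL1 : L₁ = {z : ℤ | Odd z} := by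
  ext z
  simp only [L₁, L₃, L, I, Set.mem_setOf_eq, Int.odd_iff]
  constructor
  · rintro ⟨x, h⟩; omega
  · intro h; exact ⟨0, by omega⟩

lemma hL3 : L₃ = {p : (ℤ × ℤ) × ℤ | Odd (p.2 - p.1.1 - p.1.2)} := by
  ext ⟨⟨m, n⟩, k⟩
  simp only [L₃, L, Set.mem_setOf_eq, Int.odd_iff]
  omega

lemma hL2 : L₂ = {p : ℤ × ℤ | Even (p.1 - p.2)} := by
  ext ⟨m, n⟩
  simp only [L₂, hL1, hL3, Set.mem_setOf_eq, Int.odd_iff, Int.even_iff]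
  constructor
  · rintro ⟨a, h1, h2⟩; omega
  · intro h; exact ⟨1, by omega, by omega⟩

def quotEquiv : Quot (fun m n : ℤ => (m, n) ∈ L₂) ≃ Bool where
  toFun := Quot.lift (fun n => decide (n % 2 = 1)) (by
    intro m n h
    rw [hL2] at h
    simp only [Set.mem_setOf_eq, Int.even_iff] at h
    simp only [decide_eq_decide]
    omega)
  invFun := fun b => Quot.mk _ (if b then 1 else 0)
  left_inv := by
    apply Quot.ind
    intro n
    have h : ((if decide (n % 2 = 1) = true then (1 : ℤ) else 0), n) ∈ L₂ := by
      rw [hL2]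
      simp only [Set.mem_setOf_eq, Int.even_iff]
      by_cases h : n % 2 = 1 <;> simp [h] <;> omega
    exact Quot.sound h
  right_inv := by
    intro b
    cases b <;> simp

end RSGZ2

open RSGZ2 in
/-- the structure (ℤ, L, I) with L = {(n,m,k) : n+m+k odd}, I(n) = −n has
L₁ = 2ℤ+1, L₂ = {(m,n) : m − n even}, L₃ = {(m,n,p) : p − m − n odd}, C = ℤ, and
satisfies all axioms A.1–A.6 as relation identities; yet the quotient C/L₂ ≅ ℤ/2ℤ has
two elements while the symplectic reduction of C (for the zero form, C^⊥ = ℤ) is a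
single point. -/
theorem stmt16 :
    (L₁ = {z : ℤ | Odd z}) ∧
    (L₂ = {p : ℤ × ℤ | Even (p.1 - p.2)}) ∧
    (L₃ = {p : (ℤ × ℤ) × ℤ | Odd (p.2 - p.1.1 - p.1.2)}) ∧
    (C = Set.univ) ∧
    -- A.1: cyclic symmetry
    (∀ x y z : ℤ, (x, y, z) ∈ L → (y, z, x) ∈ L) ∧
    -- A.2: I is an involution
    (∀ n : ℤ, I (I n) = n) ∧
    -- A.4: associativity of L₃
    ({q : (ℤ × ℤ × ℤ) × ℤ | ∃ b, ((q.1.1, q.1.2.1), b) ∈ L₃ ∧ ((b, q.1.2.2), q.2) ∈ L₃}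
      = {q : (ℤ × ℤ × ℤ) × ℤ |
          ∃ b, ((q.1.2.1, q.1.2.2), b) ∈ L₃ ∧ ((q.1.1, b), q.2) ∈ L₃}) ∧
    -- A.5: L₃ ∘ (L₁ × L₁) = L₁
    ({z : ℤ | ∃ a ∈ L₁, ∃ b ∈ L₁, ((a, b), z) ∈ L₃} = L₁) ∧
    -- A.6 and consequences: idempotence, invariance, symmetry
    (rcomp L₂ L₂ = L₂) ∧
    ({z : ℤ | ∃ a ∈ L₁, (a, z) ∈ L₂} = L₁) ∧
    ({p : (ℤ × ℤ) × ℤ | ∃ b, ((p.1.1, p.1.2), b) ∈ L₃ ∧ (b, p.2) ∈ L₂} = L₃) ∧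
    ({p : (ℤ × ℤ) × ℤ | ∃ a b, (p.1.1, a) ∈ L₂ ∧ (p.1.2, b) ∈ L₂ ∧ ((a, b), p.2) ∈ L₃}
      = L₃) ∧
    (transp L₂ = L₂) ∧
    -- the symplectic reduction of C (zero form) is a single point: C^⊥ = ℤ
    ({v : ℤ | ∀ w : ℤ, ωZ v w = 0} = Set.univ) ∧
    -- but the quotient C/L₂ has two elements
    (Nat.card (Quot (fun m n : ℤ => (m, n) ∈ L₂)) = 2) := by
  refine ⟨hL1, hL2, hL3, ?_, ?_, ?_, ?_, ?_, ?_, ?_, ?_, ?_, ?_, ?_, ?_⟩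
  · ext z
    simp only [C, hL2, Set.mem_setOf_eq, Set.mem_univ, iff_true]
    exact ⟨z, by simp⟩
  · intro x y z h
    simp only [L, Set.mem_setOf_eq, Int.odd_iff] at h ⊢
    omega
  · intro n; simp [I]
  · ext ⟨⟨x, y, z⟩, w⟩
    simp only [hL3, Set.mem_setOf_eq, Int.odd_iff]
    constructor
    · rintro ⟨b, h1, h2⟩; exact ⟨y + z + 1, by omega, by omega⟩
    · rintro ⟨b, h1, h2⟩; exact ⟨x + y + 1, by omega, by omega⟩
  · ext z
    simp only [hL1, hL3, Set.mem_setOf_eq, Int.odd_iff]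
    constructor
    · rintro ⟨a, ha, b, hb, h⟩; omega
    · intro h; exact ⟨1, by omega, 1, by omega, by omega⟩
  · ext ⟨m, n⟩
    simp only [rcomp, hL2, Set.mem_setOf_eq, Int.even_iff]
    constructor
    · rintro ⟨b, h1, h2⟩; omega
    · intro h; exact ⟨m, by omega, by omega⟩
  · ext z
    simp only [hL1, hL2, Set.mem_setOf_eq, Int.odd_iff, Int.even_iff]
    constructor
    · rintro ⟨a, h1, h2⟩; omega
    · intro h; exact ⟨z, by omega, by omega⟩
  · ext ⟨⟨m, n⟩, k⟩
    simp only [hL2, hL3, Set.mem_setOf_eq, Int.odd_iff, Int.even_iff]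
    constructor
    · rintro ⟨b, h1, h2⟩; omega
    · intro h; exact ⟨k, by omega, by omega⟩
  · ext ⟨⟨m, n⟩, k⟩
    simp only [hL2, hL3, Set.mem_setOf_eq, Int.odd_iff, Int.even_iff]
    constructor
    · rintro ⟨a, b, h1, h2, h3⟩; omega
    · intro h; exact ⟨m, n, by omega, by omega, by omega⟩
  · ext ⟨m, n⟩
    simp only [transp, hL2, Set.mem_setOf_eq, Int.even_iff]
    omega
  · ext v; simp [ωZ]
  · rw [Nat.card_congr quotEquiv]
    simp
end
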